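/- arXiv:2102.04900 — 2 statements merged into one kernel-verified Lean document; each statement's English description precedes it below -/
import Mathlib

section
/- Steinerberger's spectral-gap inequality fails on the punctured disks: for every pair of constants c₁ > 0 and c₂ > 0 there exists ε₀ ∈ (0, 1/2) such that for all ε ∈ (0, ε₀) and any maximum point x_ε of u_ε on Ω_ε = B(0,1) \ B̄(0,ε), one has λ_max(D²u_ε(x_ε)) > −c₁·exp(−c₂·4/(1−ε)); here 4/(1−ε) equals the ratio diam(Ω_ε)/inrad(Ω_ε) of the diameter to the inradius of Ω_ε. -/
open Real Set Metric Filter Topology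

noncomputable section

abbrev E2 := EuclideanSpace ℝ (Fin 2)

/-- Second partial derivative `∂²u/∂xᵢ∂xⱼ` at `x`. -/
noncomputable def pd2 (u : E2 → ℝ) (x : E2) (i j : Fin 2) : ℝ :=
  fderiv ℝ (fun y => fderiv ℝ u y (EuclideanSpace.single j 1)) x (EuclideanSpace.single i 1)

/-- The Hessian matrix `D²u(x)`. -/
noncomputable def Hess (u : E2 → ℝ) (x : E2) : Matrix (Fin 2) (Fin 2) ℝ :=
  Matrix.of fun i j => pd2 u x i j

/-- The Laplacian `Δu(x)`. -/
noncomputable def lap (u : E2 → ℝ) (x : E2) : ℝ := pd2 u x 0 0 + pd2 u x 1 1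

/-- The largest eigenvalue of a symmetric 2×2 real matrix. -/
noncomputable def lambdaMax (M : Matrix (Fin 2) (Fin 2) ℝ) : ℝ :=
  ((M 0 0 + M 1 1) + Real.sqrt ((M 0 0 - M 1 1) ^ 2 + (M 0 1 + M 1 0) ^ 2)) / 2

/-- `u` is the torsion function of `U`: continuous up to the boundary, `C²` inside,
`Δu = -1` in `U` and `u = 0` on `∂U`. -/
def IsTorsion (U : Set E2) (u : E2 → ℝ) : Prop :=
  ContinuousOn u (closure U) ∧ (∀ x ∈ U, ContDiffAt ℝ 2 u x) ∧
    (∀ x ∈ U, lap u x = -1) ∧ (∀ x ∈ frontier U, u x = 0)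

/-! By the maximum principle the torsion function of the annulus is unique, hence equal to the
radial function `(1 - |y|²)/4 + c log |y|²` with `c` fitted to the inner circle. At a maximum
point `x` its radial derivative vanishes, which forces `c = |x|²/4`; there the Hessian is
`-x xᵀ/|x|²`, whose largest eigenvalue is `0`. So `λ_max(D²u_ε(x_ε)) = 0` for every `ε`. -/

theorem deriv_deriv_nonpos_of_isLocalMax {f : ℝ → ℝ} {x₀ : ℝ} (hc : ContinuousAt f x₀)
    (hmax : IsLocalMax f x₀) : deriv (deriv f) x₀ ≤ 0 := by
  by_contra! hpos
  have hmin := isLocalMin_of_deriv_deriv_pos hpos hmax.deriv_eq_zero hc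
  have hconst : f =ᶠ[𝓝 x₀] fun _ => f x₀ := by
    filter_upwards [hmax, hmin] with y hle hge using le_antisymm hle hge
  have hderiv : deriv f =ᶠ[𝓝 x₀] fun _ => 0 := by
    filter_upwards [hconst.eventuallyEq_nhds] with y hy
    rw [hy.deriv_eq, deriv_const]
  rw [hderiv.deriv_eq, deriv_const] at hpos
  exact lt_irrefl 0 hpos

theorem fderiv_fderiv_apply_self_nonpos_of_isLocalMax {E : Type*} [NormedAddCommGroup E]
    [NormedSpace ℝ E] {g : E → ℝ} {x : E} (hg : ContDiffAt ℝ 2 g x) (hmax : IsLocalMax g x)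
    (v : E) : fderiv ℝ (fun y => fderiv ℝ g y v) x v ≤ 0 := by
  set line : ℝ → E := fun t => x + t • v
  have hline : ∀ t, HasDerivAt line v t := fun t =>
    by simpa only [one_smul] using ((hasDerivAt_id' t).smul_const v).const_add x
  have hline0 : line 0 = x := by simp [line]
  have hline_tendsto : Tendsto line (𝓝 0) (𝓝 x) := hline0 ▸ (hline 0).continuousAt
  have hfirst : deriv (g ∘ line) =ᶠ[𝓝 0] fun t => fderiv ℝ g (line t) v := by
    filter_upwards [hline_tendsto.eventually (hg.eventually (by norm_num))] with t ht
    exact ((ht.differentiableAt two_ne_zero).hasFDerivAt.comp_hasDerivAt t (hline t)).deriv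
  have hdiff : DifferentiableAt ℝ (fun y => fderiv ℝ g y v) x :=
    ((hg.fderiv_right (m := 1) (by norm_num)).differentiableAt one_ne_zero).clm_apply
      (differentiableAt_const v)
  have hsecond : HasDerivAt (fun t => fderiv ℝ g (line t) v)
      (fderiv ℝ (fun y => fderiv ℝ g y v) x v) 0 :=
    hdiff.hasFDerivAt.comp_hasDerivAt_of_eq 0 (hline 0) hline0.symm
  have h := deriv_deriv_nonpos_of_isLocalMax
    ((hg.continuousAt).comp_of_eq (hline 0).continuousAt hline0)
    (hline0 ▸ hmax |>.comp_continuous (hline 0).continuousAt)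
  rwa [hfirst.deriv_eq, hsecond.deriv] at h

theorem pd2_self_nonpos_of_isLocalMax {g : E2 → ℝ} {x : E2} (hg : ContDiffAt ℝ 2 g x)
    (hmax : IsLocalMax g x) (i : Fin 2) : pd2 g x i i ≤ 0 :=
  fderiv_fderiv_apply_self_nonpos_of_isLocalMax hg hmax _

theorem lap_nonpos_of_isLocalMax {g : E2 → ℝ} {x : E2} (hg : ContDiffAt ℝ 2 g x)
    (hmax : IsLocalMax g x) : lap g x ≤ 0 :=
  add_nonpos (pd2_self_nonpos_of_isLocalMax hg hmax 0) (pd2_self_nonpos_of_isLocalMax hg hmax 1)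

theorem Filter.EventuallyEq.hess_eq {u v : E2 → ℝ} {x : E2} (h : u =ᶠ[𝓝 x] v) :
    Hess u x = Hess v x := by
  ext i j
  have hfirst : (fun y => fderiv ℝ u y (EuclideanSpace.single j 1))
      =ᶠ[𝓝 x] fun y => fderiv ℝ v y (EuclideanSpace.single j 1) :=
    (h.fderiv (𝕜 := ℝ)).mono fun y hy => by simp only [hy]
  simp only [Hess, pd2, Matrix.of_apply, hfirst.fderiv_eq]

theorem pd2_linear_comb {f g : E2 → ℝ} {x : E2} (hf : ContDiffAt ℝ 2 f x)
    (hg : ContDiffAt ℝ 2 g x) (a b : ℝ) (i j : Fin 2) :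
    pd2 (fun y => a * f y + b * g y) x i j = a * pd2 f x i j + b * pd2 g x i j := by
  set e : E2 := EuclideanSpace.single j 1
  have hfirst : (fun y => fderiv ℝ (fun z => a * f z + b * g z) y e)
      =ᶠ[𝓝 x] fun y => a * fderiv ℝ f y e + b * fderiv ℝ g y e := by
    filter_upwards [hf.eventually (by norm_num), hg.eventually (by norm_num)] with y hfy hgy
    have hfd := hfy.differentiableAt two_ne_zero
    have hgd := hgy.differentiableAt two_ne_zero
    rw [fderiv_fun_add (hfd.const_mul a) (hgd.const_mul b), fderiv_const_mul hfd,
      fderiv_const_mul hgd]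
    simp
  have hdiff : ∀ {h : E2 → ℝ}, ContDiffAt ℝ 2 h x →
      DifferentiableAt ℝ (fun y => fderiv ℝ h y e) x := fun hh =>
    ((hh.fderiv_right (m := 1) (by norm_num)).differentiableAt one_ne_zero).clm_apply
      (differentiableAt_const e)
  unfold pd2
  rw [hfirst.fderiv_eq, fderiv_fun_add ((hdiff hf).const_mul a) ((hdiff hg).const_mul b),
    fderiv_const_mul (hdiff hf), fderiv_const_mul (hdiff hg)]
  simp [e]

theorem lap_linear_comb {f g : E2 → ℝ} {x : E2} (hf : ContDiffAt ℝ 2 f x)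
    (hg : ContDiffAt ℝ 2 g x) (a b : ℝ) :
    lap (fun y => a * f y + b * g y) x = a * lap f x + b * lap g x := by
  simp only [lap, pd2_linear_comb hf hg]
  ring

theorem fderiv_norm_sq_single (y : E2) (j : Fin 2) :
    fderiv ℝ (fun y : E2 => ‖y‖ ^ 2) y (EuclideanSpace.single j 1) = 2 * y j := by
  simp [EuclideanSpace.inner_single_right]

theorem pd2_norm_sq (x : E2) (i j : Fin 2) :
    pd2 (fun y => ‖y‖ ^ 2) x i j = if i = j then 2 else 0 := by
  have hproj : HasFDerivAt (fun y : E2 => 2 * y j)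
      ((2 : ℝ) • (EuclideanSpace.proj j : E2 →L[ℝ] ℝ)) x :=
    (EuclideanSpace.proj j : E2 →L[ℝ] ℝ).hasFDerivAt.const_mul 2
  simp only [pd2, fderiv_norm_sq_single, hproj.fderiv]
  simp [eq_comm]

theorem lap_norm_sq (x : E2) : lap (fun y => ‖y‖ ^ 2) x = 4 := by
  norm_num [lap, pd2_norm_sq]

section MaximumPrinciple

variable {U : Set E2}

theorem exists_mem_frontier_le_of_lap_pos (hU : IsOpen U) (hb : Bornology.IsBounded U)
    {h : E2 → ℝ} (hc : ContinuousOn h (closure U))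
    (h2 : ∀ y ∈ U, ContDiffAt ℝ 2 h y) (hlap : ∀ y ∈ U, 0 < lap h y) {y₀ : E2}
    (hy₀ : y₀ ∈ closure U) : ∃ z ∈ frontier U, h y₀ ≤ h z := by
  obtain ⟨z, hz, hzmax⟩ := hb.isCompact_closure.exists_isMaxOn ⟨y₀, hy₀⟩ hc
  refine ⟨z, ?_, hzmax hy₀⟩
  rw [hU.frontier_eq]
  refine ⟨hz, fun hzU => ?_⟩
  have hlocal : IsLocalMax h z :=
    hzmax.isLocalMax (mem_of_superset (hU.mem_nhds hzU) subset_closure)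
  exact (hlap z hzU).not_ge (lap_nonpos_of_isLocalMax (h2 z hzU) hlocal)

theorem nonpos_of_lap_nonneg (hU : IsOpen U) (hb : Bornology.IsBounded U)
    {w : E2 → ℝ} (hc : ContinuousOn w (closure U))
    (h2 : ∀ y ∈ U, ContDiffAt ℝ 2 w y) (hlap : ∀ y ∈ U, 0 ≤ lap w y)
    (hfr : ∀ y ∈ frontier U, w y ≤ 0) {y₀ : E2} (hy₀ : y₀ ∈ closure U) : w y₀ ≤ 0 := by
  obtain ⟨R, hR⟩ := hb.closure.subset_closedBall 0
  refine le_of_forall_pos_le_add fun δ hδ => ?_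
  -- perturb by a strictly subharmonic term of size at most `δ` on `closure U`
  set η := δ / (R ^ 2 + 1)
  have hη : 0 < η := by positivity
  have hsq : ContDiff ℝ 2 fun y : E2 => ‖y‖ ^ 2 := contDiff_norm_sq ℝ
  obtain ⟨z, hz, hle⟩ := exists_mem_frontier_le_of_lap_pos hU hb
    (h := fun y => 1 * w y + η * ‖y‖ ^ 2)
    ((continuousOn_const.mul hc).add (continuousOn_const.mul hsq.continuous.continuousOn))
    (fun y hy => (contDiffAt_const.mul (h2 y hy)).add (contDiffAt_const.mul hsq.contDiffAt))
    (fun y hy => by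
      rw [lap_linear_comb (h2 y hy) hsq.contDiffAt, lap_norm_sq]
      linarith [hlap y hy])
    hy₀
  have hηR : η * R ^ 2 ≤ δ := by
    rw [div_mul_eq_mul_div, div_le_iff₀ (by positivity)]
    exact mul_le_mul_of_nonneg_left (by linarith) hδ.le
  calc w y₀ ≤ 1 * w y₀ + η * ‖y₀‖ ^ 2 := by
        rw [one_mul]; exact le_add_of_nonneg_right (by positivity)
    _ ≤ 1 * w z + η * ‖z‖ ^ 2 := hle
    _ ≤ 0 + η * R ^ 2 := by
      gcongr
      · linarith [hfr z hz]
      · exact mem_closedBall_zero_iff.1 (hR (frontier_subset_closure hz))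
    _ ≤ 0 + δ := by linarith

theorem IsTorsion.eqOn (hU : IsOpen U) (hb : Bornology.IsBounded U) {u v : E2 → ℝ}
    (hu : IsTorsion U u) (hv : IsTorsion U v) : EqOn u v U := by
  have hle : ∀ {f g : E2 → ℝ}, IsTorsion U f → IsTorsion U g → ∀ y ∈ U, f y ≤ g y := by
    rintro f g ⟨hfc, hf2, hflap, hffr⟩ ⟨hgc, hg2, hglap, hgfr⟩ y hy
    have hdiff : 1 * f y + (-1) * g y ≤ 0 :=
      nonpos_of_lap_nonneg hU hb (w := fun z => 1 * f z + (-1) * g z)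
        ((continuousOn_const.mul hfc).add (continuousOn_const.mul hgc))
        (fun z hz => (contDiffAt_const.mul (hf2 z hz)).add (contDiffAt_const.mul (hg2 z hz)))
        (fun z hz => by
          rw [lap_linear_comb (hf2 z hz) (hg2 z hz), hflap z hz, hglap z hz]; norm_num)
        (fun z hz => by rw [hffr z hz, hgfr z hz]; norm_num)
        (subset_closure hy)
    linarith
  exact fun y hy => le_antisymm (hle hu hv y hy) (hle hv hu y hy)

end MaximumPrinciple

open scoped RealInnerProductSpace

theorem norm_sq_eq_E2 (x : E2) : ‖x‖ ^ 2 = x 0 ^ 2 + x 1 ^ 2 := by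
  simp [EuclideanSpace.norm_sq_eq, Fin.sum_univ_two]

theorem lambdaMax_neg_outer_div_norm_sq {x : E2} (hx : x ≠ 0) :
    lambdaMax (Matrix.of fun i j => -(x i * x j) / ‖x‖ ^ 2) = 0 := by
  have hq : x 0 ^ 2 + x 1 ^ 2 ≠ 0 := norm_sq_eq_E2 x ▸ (by positivity)
  have hdisc : (-(x 0 * x 0) / ‖x‖ ^ 2 - -(x 1 * x 1) / ‖x‖ ^ 2) ^ 2
      + (-(x 0 * x 1) / ‖x‖ ^ 2 + -(x 1 * x 0) / ‖x‖ ^ 2) ^ 2 = 1 := by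
    rw [norm_sq_eq_E2]
    field_simp
    ring
  simp only [lambdaMax, Matrix.of_apply, hdisc, Real.sqrt_one]
  rw [norm_sq_eq_E2]
  field_simp
  ring

/-- The radial solutions of `Δv = -1` on `ℝ² \ {0}`. -/
def radialTorsion (c : ℝ) (y : E2) : ℝ := (1 - ‖y‖ ^ 2) / 4 + c * Real.log (‖y‖ ^ 2)

section radialTorsion

variable {c : ℝ} {x : E2}

theorem contDiffAt_radialTorsion (hx : x ≠ 0) : ContDiffAt ℝ 2 (radialTorsion c) x := by
  have hsq : ContDiffAt ℝ 2 (fun y : E2 => ‖y‖ ^ 2) x := (contDiff_norm_sq ℝ).contDiffAt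
  exact ((contDiffAt_const.sub hsq).div_const 4).add
    (contDiffAt_const.mul ((Real.contDiffAt_log.2 (by positivity)).comp x hsq))

theorem fderiv_radialTorsion_apply (hx : x ≠ 0) (v : E2) :
    fderiv ℝ (radialTorsion c) x v = 2 * (c / ‖x‖ ^ 2 - 1 / 4) * ⟪x, v⟫ := by
  have hq := (hasStrictFDerivAt_norm_sq x).hasFDerivAt
  have hlog := (Real.hasDerivAt_log (by positivity : ‖x‖ ^ 2 ≠ 0)).comp_hasFDerivAt x hq
  have hpoly : HasFDerivAt (fun y : E2 => (1 - ‖y‖ ^ 2) / 4) _ x :=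
    (hq.const_sub 1).mul_const 4⁻¹
  have hv : HasFDerivAt (radialTorsion c) _ x := hpoly.fun_add (hlog.const_mul c)
  rw [hv.fderiv]
  simp only [add_apply, neg_apply, smul_apply, coe_innerSL_apply, smul_neg,
    nsmul_eq_mul, Nat.cast_ofNat, smul_eq_mul, one_div]
  ring

theorem pd2_radialTorsion (hx : x ≠ 0) (i j : Fin 2) :
    pd2 (radialTorsion c) x i j =
      2 * (c / ‖x‖ ^ 2 - 1 / 4) * (if i = j then 1 else 0) - 4 * c * x i * x j / ‖x‖ ^ 4 := by
  have hfirst : (fun y => fderiv ℝ (radialTorsion c) y (EuclideanSpace.single j 1))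
      =ᶠ[𝓝 x] fun y => 2 * (c * (‖y‖ ^ 2)⁻¹ - 1 / 4) * y j := by
    filter_upwards [isOpen_ne.mem_nhds hx] with y hy
    simp [fderiv_radialTorsion_apply hy, EuclideanSpace.inner_single_right, div_eq_mul_inv]
  have hq := (hasStrictFDerivAt_norm_sq x).hasFDerivAt
  have hinv := (hasDerivAt_inv (by positivity : ‖x‖ ^ 2 ≠ 0)).comp_hasFDerivAt x hq
  have hcoef := ((hinv.const_mul c).sub_const (1 / 4 : ℝ)).const_mul (2 : ℝ)
  have hcoord := (EuclideanSpace.proj j : E2 →L[ℝ] ℝ).hasFDerivAt (x := x)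
  have hderiv : HasFDerivAt (fun y : E2 => 2 * (c * (‖y‖ ^ 2)⁻¹ - 1 / 4) * y j) _ x :=
    hcoef.fun_mul hcoord
  rw [pd2, hfirst.fderiv_eq, hderiv.fderiv]
  have hq0 : ‖x‖ ≠ 0 := norm_ne_zero_iff.2 hx
  simp only [Function.comp_apply, add_apply, neg_apply, smul_apply,
    coe_innerSL_apply, PiLp.proj_apply, PiLp.single_apply, EuclideanSpace.inner_single_right,
    RCLike.conj_to_real, eq_comm, neg_smul, smul_neg, smul_eq_mul, nsmul_eq_mul, Nat.cast_ofNat,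
    mul_ite, mul_one, mul_zero, one_mul, one_div]
  field_simp
  ring

theorem lap_radialTorsion (hx : x ≠ 0) : lap (radialTorsion c) x = -1 := by
  have hq : ‖x‖ ^ 2 ≠ 0 := by positivity
  simp only [lap, pd2_radialTorsion hx, if_pos]
  rw [show ‖x‖ ^ 4 = (‖x‖ ^ 2) ^ 2 by ring, norm_sq_eq_E2] at *
  field_simp
  ring

theorem IsLocalMax.radialTorsion_const_eq (hx : x ≠ 0)
    (hmax : IsLocalMax (radialTorsion c) x) : c = ‖x‖ ^ 2 / 4 := by
  have hq : ‖x‖ ^ 2 ≠ 0 := by positivity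
  have hcrit : c / ‖x‖ ^ 2 - 1 / 4 = 0 := by
    simpa [fderiv_radialTorsion_apply hx, real_inner_self_eq_norm_sq, hq] using
      DFunLike.congr_fun hmax.fderiv_eq_zero x
  field_simp at hcrit
  linarith

theorem hess_radialTorsion_norm_sq_div_four (hx : x ≠ 0) :
    Hess (radialTorsion (‖x‖ ^ 2 / 4)) x = Matrix.of fun i j => -(x i * x j) / ‖x‖ ^ 2 := by
  ext i j
  have hq : ‖x‖ ≠ 0 := norm_ne_zero_iff.2 hx
  simp only [Hess, Matrix.of_apply, pd2_radialTorsion hx]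
  field_simp
  ring

end radialTorsion

theorem isTorsion_annulus_radialTorsion {ε : ℝ} (hε : 0 < ε) (hε1 : ε < 1) :
    IsTorsion (ball (0 : E2) 1 \ closedBall 0 ε)
      (radialTorsion (-(1 - ε ^ 2) / (4 * Real.log (ε ^ 2)))) := by
  set Ω := ball (0 : E2) 1 \ closedBall 0 ε
  have hΩ : IsOpen Ω := isOpen_ball.sdiff isClosed_closedBall
  have hclosure : closure Ω ⊆ closedBall 0 1 \ ball 0 ε :=
    closure_minimal (sdiff_subset_sdiff ball_subset_closedBall ball_subset_closedBall)
      (isClosed_closedBall.sdiff isOpen_ball)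
  have hne : ∀ y ∈ closure Ω, y ≠ 0 := fun y hy h0 => by
    have := (hclosure hy).2
    simp [h0, hε] at this
  refine ⟨fun y hy => (contDiffAt_radialTorsion (hne y hy)).continuousAt.continuousWithinAt,
    fun y hy => contDiffAt_radialTorsion (hne y (subset_closure hy)),
    fun y hy => lap_radialTorsion (hne y (subset_closure hy)), fun y hy => ?_⟩
  rw [hΩ.frontier_eq] at hy
  obtain ⟨hyc, hyΩ⟩ := hy
  obtain ⟨hy1, hyε⟩ := hclosure hyc
  simp only [Ω, Set.mem_sdiff, mem_ball_zero_iff, mem_closedBall_zero_iff, not_lt, not_and,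
    not_le] at hy1 hyε hyΩ
  have hlog : Real.log (ε ^ 2) ≠ 0 := (Real.log_neg (by positivity) (by nlinarith)).ne
  rcases hy1.lt_or_eq with hlt | heq
  · rw [radialTorsion, le_antisymm (hyΩ hlt) hyε]
    field_simp
    ring
  · simp [radialTorsion, heq]

theorem spectral_gap_inequality_fails_on_annuli_general
    (c₁ c₂ : ℝ) (hc₁ : 0 < c₁) :
    ∃ ε₀ ∈ Ioo (0:ℝ) (1/2), ∀ ε ∈ Ioo (0:ℝ) ε₀, ∀ u : E2 → ℝ, ∀ x : E2,
      IsTorsion (ball (0:E2) 1 \ closedBall (0:E2) ε) u →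
      x ∈ ball (0:E2) 1 \ closedBall (0:E2) ε →
      IsMaxOn u (ball (0:E2) 1 \ closedBall (0:E2) ε) x →
      lambdaMax (Hess u x) > -c₁ * Real.exp (-c₂ * (4 / (1 - ε))) := by
  refine ⟨1 / 4, by norm_num, fun ε ⟨hε, hε4⟩ u x hu hx hmax => ?_⟩
  have hΩ : IsOpen (ball (0 : E2) 1 \ closedBall 0 ε) := isOpen_ball.sdiff isClosed_closedBall
  have hx0 : x ≠ 0 := fun h => by simp [h, hε.le] at hx
  have huv : u =ᶠ[𝓝 x] radialTorsion (-(1 - ε ^ 2) / (4 * Real.log (ε ^ 2))) :=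
    mem_of_superset (hΩ.mem_nhds hx) <| hu.eqOn hΩ (isBounded_ball.subset sdiff_subset)
      (isTorsion_annulus_radialTorsion hε (by linarith))
  have hc := (hmax.isLocalMax (hΩ.mem_nhds hx)).congr huv |>.radialTorsion_const_eq hx0
  rw [huv.hess_eq, hc, hess_radialTorsion_norm_sq_div_four hx0,
    lambdaMax_neg_outer_div_norm_sq hx0]
  exact mul_neg_of_neg_of_pos (neg_neg_of_pos hc₁) (Real.exp_pos _)

/-- Steinerberger's spectral-gap inequality fails on the punctured disks
`Ω_ε = B(0,1) \ B̄(0,ε)`: for every `c₁, c₂ > 0` there is `ε₀ ∈ (0,1/2)` such that for all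
`ε ∈ (0,ε₀)` and any maximum point `x_ε` of the torsion function `u_ε` of `Ω_ε`,
`λ_max(D²u_ε(x_ε)) > -c₁·exp(-c₂·4/(1-ε))`, where `4/(1-ε) = diam(Ω_ε)/inrad(Ω_ε)`. -/
theorem spectral_gap_inequality_fails_on_annuli
    (c₁ c₂ : ℝ) (hc₁ : 0 < c₁) (hc₂ : 0 < c₂) :
    ∃ ε₀ ∈ Ioo (0:ℝ) (1/2), ∀ ε ∈ Ioo (0:ℝ) ε₀, ∀ u : E2 → ℝ, ∀ x : E2,
      IsTorsion (ball (0:E2) 1 \ closedBall (0:E2) ε) u →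
      x ∈ ball (0:E2) 1 \ closedBall (0:E2) ε →
      IsMaxOn u (ball (0:E2) 1 \ closedBall (0:E2) ε) x →
      lambdaMax (Hess u x) > -c₁ * Real.exp (-c₂ * (4 / (1 - ε))) :=
  spectral_gap_inequality_fails_on_annuli_general c₁ c₂ hc₁
end
end

section
/- For every r > 0 there exist C > 0 and ε₀ > 0 such that for all ε ∈ (0, ε₀), all x ∈ Ω_ε with |x − x₀| ≥ r, and all z on the circle ∂B(x₀, ε), the normal derivative of the Green's function G_ε of Ω_ε satisfies |∂G_ε(x, z)/∂ν_z| ≤ C/ε, where ∂/∂ν_z denotes the directional derivative in the second variable in the direction ν_z = −(z − x₀)/|z − x₀|. -/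
open Real Set Metric Filter Topology

noncomputable section

/-
Fix `ε`, a pole `x` with `‖x - x₀‖ ≥ r`, and write `g = G_ε(·, x)`. The maximum principle gives
three facts. First, `g ≥ 0`: near `x` the singularity `-log ‖· - x‖ / 2π` dominates, and away
from it `g` is harmonic with nonnegative boundary values. Second, on the circle
`‖w - x₀‖ = ρ := min ε₁ (r/2)`, which stays at distance `≥ r/2` from `x`, the regular part
`g + log ‖· - x‖ / 2π` is at most `log (diam Ω) / 2π`, so `g ≤ M := log (diam Ω / (r/2)) / 2π`
uniformly in `ε`. Third, on the annulus `ε < ‖w - x₀‖ < ρ`, comparing with the radial harmonic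
function gives `g(w) ≤ M log (‖w - x₀‖/ε) / log (ρ/ε)`. So `0 ≤ g ≤ M t / (ε log (ρ/ε))` at
distance `t` from `z` along the normal into `Ω_ε`. Since `g(z) = 0`, the normal derivative is at
most `M / (ε log (ρ/ε))`, and this is `≤ M/ε` once `ε ≤ ρ/e`.
-/

local notation "𝐞" => EuclideanSpace.single (𝕜 := ℝ) (ι := Fin 2)

section NormedSpace

variable {E : Type*} [NormedAddCommGroup E] [NormedSpace ℝ E]

lemma differentiableAt_fderiv_apply {u : E → ℝ} {x : E} (hu : ContDiffAt ℝ 2 u x) (e : E) :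
    DifferentiableAt ℝ (fun y => fderiv ℝ u y e) x :=
  ((hu.fderiv_right (m := 1) le_rfl).differentiableAt one_ne_zero).clm_apply
    (differentiableAt_const e)

lemma IsLocalMax.hasDerivAt_deriv_nonpos {φ : ℝ → ℝ} {a c : ℝ} (hmax : IsLocalMax φ a)
    (hφ : ContinuousAt φ a) (hc : HasDerivAt (deriv φ) c a) : c ≤ 0 := by
  by_contra! hpos
  -- a second-derivative-test minimum that is also a maximum makes `φ` locally constant
  have hmin : IsLocalMin φ a :=
    isLocalMin_of_deriv_deriv_pos (hc.deriv ▸ hpos) hmax.deriv_eq_zero hφ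
  have hconst : deriv φ =ᶠ[𝓝 a] fun _ => 0 := by
    have : φ =ᶠ[𝓝 a] fun _ => φ a := by
      filter_upwards [hmin, hmax] with t h₁ h₂ using le_antisymm h₂ h₁
    filter_upwards [this.eventuallyEq_nhds] with t ht
    rw [ht.deriv_eq, deriv_const]
  exact hpos.ne' ((hc.congr_of_eventuallyEq hconst.symm).unique (hasDerivAt_const a 0))

lemma IsLocalMax.fderiv_fderiv_apply_nonpos {u : E → ℝ} {p : E} (hmax : IsLocalMax u p)
    (hu : ContDiffAt ℝ 2 u p) (e : E) : fderiv ℝ (fun y => fderiv ℝ u y e) p e ≤ 0 := by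
  set ℓ : ℝ → E := fun t => p + t • e
  have hℓ (t : ℝ) : HasDerivAt ℓ e t := by
    simpa only [id, one_smul] using ((hasDerivAt_id t).smul_const e).const_add p
  have hℓ0 : ℓ 0 = p := by simp [ℓ]
  have hℓp : Tendsto ℓ (𝓝 0) (𝓝 p) := hℓ0 ▸ (hℓ 0).continuousAt
  have hderiv : deriv (u ∘ ℓ) =ᶠ[𝓝 0] fun t => fderiv ℝ u (ℓ t) e := by
    filter_upwards [hℓp.eventually (hu.eventually (by simp))] with t ht
    exact ((ht.differentiableAt two_ne_zero).hasFDerivAt.comp_hasDerivAt t (hℓ t)).deriv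
  have hsecond : HasDerivAt (fun t => fderiv ℝ u (ℓ t) e)
      (fderiv ℝ (fun y => fderiv ℝ u y e) p e) 0 :=
    (differentiableAt_fderiv_apply hu e).hasFDerivAt.comp_hasDerivAt_of_eq 0 (hℓ 0) hℓ0.symm
  exact IsLocalMax.hasDerivAt_deriv_nonpos ((hℓ0 ▸ hmax).comp_continuous (hℓ 0).continuousAt)
    (hu.continuousAt.comp_of_eq (hℓ 0).continuousAt hℓ0)
    (hsecond.congr_of_eventuallyEq hderiv)

lemma abs_fderiv_apply_le_of_abs_le {u : E → ℝ} {z v : E} {K τ : ℝ}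
    (hu : DifferentiableAt ℝ u z) (hz : u z = 0) (hτ : 0 < τ)
    (h : ∀ t ∈ Ioo 0 τ, |u (z + t • v)| ≤ K * t) : |fderiv ℝ u z v| ≤ K := by
  have hline : HasDerivAt (fun t : ℝ => u (z + t • v)) (fderiv ℝ u z v) 0 := by
    refine hu.hasFDerivAt.comp_hasDerivAt_of_eq 0 ?_ (by simp)
    simpa only [id, one_smul] using ((hasDerivAt_id (0 : ℝ)).smul_const v).const_add z
  have hslope := (hasDerivAt_iff_tendsto_slope.1 hline).mono_left
    (nhdsGT_le_nhdsNE (0 : ℝ))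
  refine le_of_tendsto (continuous_abs.continuousAt.tendsto.comp hslope) ?_
  filter_upwards [Ioo_mem_nhdsGT hτ] with t ht
  simp only [Function.comp, slope_def_field, zero_smul, add_zero, hz, sub_zero, abs_div,
    abs_of_pos ht.1]
  exact (div_le_iff₀ ht.1).2 (h t ht)

lemma frontier_diff_closedBall_subset (U : Set E) (x : E) {s : ℝ} (hs : s ≠ 0) :
    frontier (U \ closedBall x s) ⊆ frontier U ∪ sphere x s := by
  rw [sdiff_eq, ← frontier_closedBall x hs, ← frontier_compl (closedBall x s)]
  exact (frontier_inter_subset _ _).trans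
    (union_subset_union inter_subset_left inter_subset_right)

lemma closure_diff_closedBall_subset (U : Set E) (x : E) {s : ℝ} (hs : s ≠ 0) :
    closure (U \ closedBall x s) ⊆ closure U \ ball x s := by
  have h := closure_inter_subset_inter_closure U (closedBall x s)ᶜ
  rwa [← sdiff_eq, closure_compl, interior_closedBall x hs, ← sdiff_eq] at h

lemma sphere_subset_frontier_diff_closedBall {U : Set E} (hU : IsOpen U) {x : E} {s s' : ℝ}
    (hs : s ≠ 0) (hss' : s < s') (hball : ball x s' ⊆ U) :
    sphere x s ⊆ frontier (U \ closedBall x s) := by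
  intro z hz
  rw [frontier, (hU.sdiff isClosed_closedBall).interior_eq]
  have hz' : z ∈ ball x s' := mem_ball.2 (hz.symm ▸ hss' : dist z x < s')
  have hcl : z ∈ closure (closedBall x s)ᶜ := by
    rw [closure_compl, interior_closedBall x hs]
    exact fun h => (mem_ball.1 h).ne hz
  have hsub : ball x s' ∩ (closedBall x s)ᶜ ⊆ U \ closedBall x s :=
    fun w hw => ⟨hball hw.1, hw.2⟩
  exact ⟨closure_mono hsub (isOpen_ball.inter_closure ⟨hz', hcl⟩),
    fun h => h.2 (sphere_subset_closedBall hz)⟩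

lemma norm_add_smul_inv_norm_smul_sub {z c : E} (hz : z ≠ c) {t : ℝ} (ht : 0 ≤ t) :
    ‖z + t • (‖z - c‖⁻¹ • (z - c)) - c‖ = ‖z - c‖ + t := by
  have hpos : 0 < ‖z - c‖ := norm_pos_iff.2 (sub_ne_zero.2 hz)
  rw [show z + t • (‖z - c‖⁻¹ • (z - c)) - c = (1 + t * ‖z - c‖⁻¹) • (z - c) by module,
    norm_smul, Real.norm_of_nonneg (by positivity)]
  field_simp

end NormedSpace

section Laplacian

variable {u v : E2 → ℝ} {x : E2}

lemma pd2_eq_of_eventually_fderiv_eq {g : E2 → ℝ} {g' : E2 →L[ℝ] ℝ} (i j : Fin 2)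
    (h : ∀ᶠ y in 𝓝 x, fderiv ℝ u y (𝐞 j 1) = g y) (hg : HasFDerivAt g g' x) :
    pd2 u x i j = g' (𝐞 i 1) := by
  rw [pd2, (hg.congr_of_eventuallyEq h).fderiv]

lemma pd2_add (hu : ContDiffAt ℝ 2 u x) (hv : ContDiffAt ℝ 2 v x) (i j : Fin 2) :
    pd2 (fun y => u y + v y) x i j = pd2 u x i j + pd2 v x i j := by
  have hsum : ∀ᶠ y in 𝓝 x, fderiv ℝ (fun y => u y + v y) y (𝐞 j 1)
      = fderiv ℝ u y (𝐞 j 1) + fderiv ℝ v y (𝐞 j 1) := by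
    filter_upwards [hu.eventually (by simp), hv.eventually (by simp)] with y huy hvy
    rw [fderiv_fun_add (huy.differentiableAt two_ne_zero) (hvy.differentiableAt two_ne_zero)]
    rfl
  rw [pd2_eq_of_eventually_fderiv_eq i j hsum ((differentiableAt_fderiv_apply hu _).hasFDerivAt.add
    (differentiableAt_fderiv_apply hv _).hasFDerivAt)]
  rfl

lemma pd2_const_mul (a : ℝ) (i j : Fin 2) :
    pd2 (fun y => a * u y) x i j = a * pd2 u x i j := by
  have h : ∀ w : E2 → ℝ, fderiv ℝ (fun y => a * w y) = a • fderiv ℝ w :=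
    fun w => fderiv_const_smul_field (f := w) a
  simp only [pd2, h, Pi.smul_apply, FunLike.coe_smul, smul_eq_mul]

lemma pd2_add_const (a : ℝ) (i j : Fin 2) : pd2 (fun y => u y + a) x i j = pd2 u x i j := by
  simp only [pd2, fderiv_add_const]

lemma lap_add (hu : ContDiffAt ℝ 2 u x) (hv : ContDiffAt ℝ 2 v x) :
    lap (fun y => u y + v y) x = lap u x + lap v x := by
  simp only [lap, pd2_add hu hv]; ring

lemma lap_const_mul (a : ℝ) : lap (fun y => a * u y) x = a * lap u x := by
  simp only [lap, pd2_const_mul]; ring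

lemma lap_add_const (a : ℝ) : lap (fun y => u y + a) x = lap u x := by
  simp only [lap, pd2_add_const]

lemma lap_neg : lap (fun y => -u y) x = -lap u x := by
  simpa only [neg_one_mul] using lap_const_mul (u := u) (x := x) (-1)

lemma lap_sub (hu : ContDiffAt ℝ 2 u x) (hv : ContDiffAt ℝ 2 v x) :
    lap (fun y => u y - v y) x = lap u x - lap v x := by
  simpa only [lap_neg, ← sub_eq_add_neg] using lap_add hu hv.neg

lemma hasFDerivAt_norm_sub_sq (a y : E2) :
    HasFDerivAt (fun y : E2 => ‖y - a‖ ^ 2) (2 • innerSL ℝ (y - a)) y := by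
  simpa using ((hasFDerivAt_id y).sub_const a).norm_sq

lemma fderiv_norm_sub_sq_apply_single (a y : E2) (j : Fin 2) :
    fderiv ℝ (fun y : E2 => ‖y - a‖ ^ 2) y (𝐞 j 1) = 2 * (y j - a j) := by
  rw [(hasFDerivAt_norm_sub_sq a y).fderiv]
  simp [EuclideanSpace.inner_single_right]

lemma hasFDerivAt_coord_sub (a : E2) (j : Fin 2) (y : E2) :
    HasFDerivAt (fun y : E2 => y j - a j) (EuclideanSpace.proj (𝕜 := ℝ) j) y :=
  (EuclideanSpace.proj (𝕜 := ℝ) (ι := Fin 2) j).hasFDerivAt.sub_const (a j)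

lemma lap_norm_sub_sq (a x : E2) : lap (fun y => ‖y - a‖ ^ 2) x = 4 := by
  have h (j : Fin 2) : pd2 (fun y => ‖y - a‖ ^ 2) x j j = 2 :=
    pd2_eq_of_eventually_fderiv_eq j j (.of_forall fun y => fderiv_norm_sub_sq_apply_single a y j)
      ((hasFDerivAt_coord_sub a j x).const_mul 2) |>.trans (by simp)
  rw [lap, h, h]; norm_num

lemma contDiffAt_log_norm_sub {a z : E2} (h : z ≠ a) :
    ContDiffAt ℝ 2 (fun y : E2 => log ‖y - a‖) z :=
  ((contDiffAt_id.sub contDiffAt_const).norm ℝ (sub_ne_zero.2 h)).log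
    (norm_ne_zero_iff.2 (sub_ne_zero.2 h))

lemma fderiv_log_norm_sub_apply_single {a y : E2} (h : y ≠ a) (j : Fin 2) :
    fderiv ℝ (fun y : E2 => log ‖y - a‖) y (𝐞 j 1) = (y j - a j) * (‖y - a‖ ^ 2)⁻¹ := by
  have hQ : ‖y - a‖ ^ 2 ≠ 0 := by simpa [sub_eq_zero] using h
  have hlog : (fun y : E2 => log ‖y - a‖) = fun y => 2⁻¹ * log (‖y - a‖ ^ 2) := by
    ext y; rw [log_pow]; ring
  rw [hlog, (((hasFDerivAt_norm_sub_sq a y).log hQ).const_mul 2⁻¹).fderiv]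
  simp [EuclideanSpace.inner_single_right]
  field_simp

lemma lap_log_norm_sub {a z : E2} (h : z ≠ a) : lap (fun y => log ‖y - a‖) z = 0 := by
  have hQ : ‖z - a‖ ^ 2 ≠ 0 := by simpa [sub_eq_zero] using h
  have h (j : Fin 2) : pd2 (fun y => log ‖y - a‖) z j j
      = (‖z - a‖ ^ 2)⁻¹ - 2 * (z j - a j) ^ 2 * ((‖z - a‖ ^ 2) ^ 2)⁻¹ := by
    refine (pd2_eq_of_eventually_fderiv_eq j j ?_ ((hasFDerivAt_coord_sub a j z).mul
      ((hasDerivAt_inv hQ).comp_hasFDerivAt z (hasFDerivAt_norm_sub_sq a z)))).trans ?_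
    · filter_upwards [isOpen_ne.mem_nhds h] with y hy
      exact fderiv_log_norm_sub_apply_single hy j
    · simp [EuclideanSpace.inner_single_right]
      ring
  rw [lap, h, h, EuclideanSpace.real_norm_sq_eq, Fin.sum_univ_two]
  rw [EuclideanSpace.real_norm_sq_eq, Fin.sum_univ_two] at hQ
  simp only [PiLp.sub_apply] at *
  field_simp
  ring

end Laplacian

section MaximumPrinciple

variable {U : Set E2} {u : E2 → ℝ}

lemma IsLocalMax.lap_nonpos {p : E2} (hmax : IsLocalMax u p)
    (hu : ContDiffAt ℝ 2 u p) : lap u p ≤ 0 :=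
  add_nonpos (hmax.fderiv_fderiv_apply_nonpos hu _) (hmax.fderiv_fderiv_apply_nonpos hu _)

lemma exists_mem_frontier_isMaxOn_of_lap_pos (hUo : IsOpen U) (hUb : Bornology.IsBounded U)
    (hne : (closure U).Nonempty) (hc : ContinuousOn u (closure U))
    (hd : ∀ x ∈ U, ContDiffAt ℝ 2 u x) (hl : ∀ x ∈ U, 0 < lap u x) :
    ∃ p ∈ frontier U, IsMaxOn u (closure U) p := by
  obtain ⟨p, hp, hmax⟩ := hUb.isCompact_closure.exists_isMaxOn hne hc
  refine ⟨p, ⟨hp, fun hpU => ?_⟩, hmax⟩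
  rw [hUo.interior_eq] at hpU
  exact (hl p hpU).not_ge ((hmax.isLocalMax (mem_of_superset (hUo.mem_nhds hpU)
    subset_closure)).lap_nonpos (hd p hpU))

theorem nonpos_of_lap_nonneg_s18 (hUo : IsOpen U) (hUb : Bornology.IsBounded U)
    (hc : ContinuousOn u (closure U)) (hd : ∀ x ∈ U, ContDiffAt ℝ 2 u x)
    (hl : ∀ x ∈ U, 0 ≤ lap u x) (hb : ∀ x ∈ frontier U, u x ≤ 0) :
    ∀ x ∈ closure U, u x ≤ 0 := by
  intro z hz
  obtain ⟨R, hR⟩ := hUb.closure.subset_closedBall z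
  refine le_of_forall_pos_le_add fun η hη => ?_
  -- perturb by a strictly subharmonic function vanishing at `z`
  set δ := η / (R ^ 2 + 1)
  have hδ : 0 < δ := by positivity
  set v : E2 → ℝ := fun y => u y + δ * ‖y - z‖ ^ 2
  have hq : ContDiff ℝ 2 fun y : E2 => ‖y - z‖ ^ 2 := (contDiff_id.sub contDiff_const).norm_sq ℝ
  obtain ⟨p, hp, hmax⟩ := exists_mem_frontier_isMaxOn_of_lap_pos (u := v) hUo hUb ⟨z, hz⟩
    (hc.add (continuousOn_const.mul hq.continuous.continuousOn))
    (fun x hx => (hd x hx).add (contDiffAt_const.mul hq.contDiffAt))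
    (fun x hx => by
      rw [lap_add (hd x hx) (contDiffAt_const.mul hq.contDiffAt), lap_const_mul, lap_norm_sub_sq]
      linarith [hl x hx])
  have hpz : ‖p - z‖ ^ 2 ≤ R ^ 2 := by
    have := mem_closedBall_iff_norm.1 (hR (frontier_subset_closure hp))
    gcongr
  calc u z = v z := by simp [v]
    _ ≤ v p := hmax hz
    _ ≤ 0 + δ * R ^ 2 := add_le_add (hb p hp) (by gcongr)
    _ ≤ 0 + η := by
      gcongr
      rw [div_mul_eq_mul_div, div_le_iff₀ (by positivity)]
      nlinarith

theorem le_of_lap_nonneg_annulus {g : E2 → ℝ} {x₀ : E2} {ε ρ M : ℝ} (hε : 0 < ε) (hερ : ε < ρ)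
    (hc : ContinuousOn g (closure (ball x₀ ρ \ closedBall x₀ ε)))
    (hd : ∀ w ∈ ball x₀ ρ \ closedBall x₀ ε, ContDiffAt ℝ 2 g w)
    (hl : ∀ w ∈ ball x₀ ρ \ closedBall x₀ ε, 0 ≤ lap g w)
    (hin : ∀ w ∈ sphere x₀ ε, g w ≤ 0) (hout : ∀ w ∈ sphere x₀ ρ, g w ≤ M) :
    ∀ w ∈ ball x₀ ρ \ closedBall x₀ ε,
      g w ≤ M * (log ‖w - x₀‖ - log ε) / (log ρ - log ε) := by
  have hL : 0 < log ρ - log ε := sub_pos.2 (log_lt_log hε hερ)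
  set k := M / (log ρ - log ε)
  have hne : ∀ w ∈ closure (ball x₀ ρ \ closedBall x₀ ε), w ≠ x₀ := fun w hw h =>
    (closure_diff_closedBall_subset _ _ hε.ne' hw).2 (h ▸ mem_ball_self hε)
  have hlog : ContinuousOn (fun w : E2 => log ‖w - x₀‖) (closure (ball x₀ ρ \ closedBall x₀ ε)) :=
    fun w hw => (contDiffAt_log_norm_sub (hne w hw)).continuousAt.continuousWithinAt
  have hcd (w) (hw : w ∈ ball x₀ ρ \ closedBall x₀ ε) :
      ContDiffAt ℝ 2 (fun w : E2 => k * log ‖w - x₀‖) w :=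
    contDiffAt_const.mul (contDiffAt_log_norm_sub (hne w (subset_closure hw)))
  have hmax := nonpos_of_lap_nonneg_s18 (u := fun w => g w - k * log ‖w - x₀‖ + k * log ε)
    (isOpen_ball.sdiff isClosed_closedBall) (isBounded_ball.subset sdiff_subset)
    ((hc.sub (continuousOn_const.mul hlog)).add continuousOn_const)
    (fun w hw => ((hd w hw).sub (hcd w hw)).add contDiffAt_const)
    (fun w hw => by
      rw [lap_add_const, lap_sub (hd w hw) (hcd w hw), lap_const_mul,
        lap_log_norm_sub (hne w (subset_closure hw))]
      simpa using hl w hw)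
    (fun w hw => by
      rcases frontier_diff_closedBall_subset _ _ hε.ne' hw with hw | hw
      · rw [frontier_ball x₀ (hε.trans hερ).ne'] at hw
        have hk : k * log ρ - k * log ε = M := by rw [← mul_sub, div_mul_cancel₀ _ hL.ne']
        rw [mem_sphere_iff_norm.1 hw]
        linarith [hout w hw]
      · rw [mem_sphere_iff_norm.1 hw]
        linarith [hin w hw])
  intro w hw
  have := hmax w (subset_closure hw)
  rw [← div_mul_eq_mul_div]
  linarith

end MaximumPrinciple

def greenRegularPart (g : E2 → ℝ) (x : E2) : E2 → ℝ := fun w => g w + 1 / (2 * π) * log ‖w - x‖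

lemma eq_greenRegularPart_sub (g : E2 → ℝ) (x : E2) :
    g = fun w => greenRegularPart g x w - 1 / (2 * π) * log ‖w - x‖ := by
  ext w; simp [greenRegularPart]

structure IsGreenFunction (U : Set E2) (x : E2) (g : E2 → ℝ) : Prop where
  regular : ∀ w ∈ U, ContDiffAt ℝ 2 (greenRegularPart g x) w ∧ lap (greenRegularPart g x) w = 0
  continuousOn_regular : ContinuousOn (greenRegularPart g x) (closure U)
  eq_zero_of_mem_frontier : ∀ w ∈ frontier U, g w = 0

namespace IsGreenFunction

variable {U : Set E2} {x : E2} {g : E2 → ℝ}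

lemma contDiffAt (hG : IsGreenFunction U x g) {w : E2} (hw : w ∈ U) (hwx : w ≠ x) :
    ContDiffAt ℝ 2 g w := by
  rw [eq_greenRegularPart_sub g x]
  exact (hG.regular w hw).1.sub (contDiffAt_const.mul (contDiffAt_log_norm_sub hwx))

lemma lap_eq_zero (hG : IsGreenFunction U x g) {w : E2} (hw : w ∈ U) (hwx : w ≠ x) :
    lap g w = 0 := by
  rw [eq_greenRegularPart_sub g x, lap_sub (hG.regular w hw).1
    (contDiffAt_const.mul (contDiffAt_log_norm_sub hwx)), lap_const_mul,
    lap_log_norm_sub hwx, (hG.regular w hw).2]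
  ring

lemma continuousOn (hG : IsGreenFunction U x g) : ContinuousOn g (closure U \ {x}) := by
  rw [eq_greenRegularPart_sub g x]
  exact (hG.continuousOn_regular.mono sdiff_subset).sub (continuousOn_const.mul fun w hw =>
    (contDiffAt_log_norm_sub hw.2).continuousAt.continuousWithinAt)

lemma le_log_sub_log (hG : IsGreenFunction U x g) (hUo : IsOpen U)
    (hUb : Bornology.IsBounded U) (hx : x ∈ U) {D a : ℝ} (hD : diam U ≤ D) (ha : 0 < a)
    {w : E2} (hw : w ∈ closure U) (hwa : a ≤ ‖w - x‖) :
    g w ≤ 1 / (2 * π) * (log D - log a) := by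
  have hc : 0 < 1 / (2 * π) := by positivity
  have hreg := nonpos_of_lap_nonneg_s18
    (u := fun w => greenRegularPart g x w + -(1 / (2 * π) * log D))
    hUo hUb (hG.continuousOn_regular.add continuousOn_const)
    (fun w hw => (hG.regular w hw).1.add contDiffAt_const)
    (fun w hw => by rw [lap_add_const, (hG.regular w hw).2])
    (fun w hw => by
      have hwx : w ≠ x := fun h => hw.2 (hUo.interior_eq.symm ▸ h ▸ hx)
      have hwD : ‖w - x‖ ≤ D := by
        rw [← dist_eq_norm]
        exact (dist_le_diam_of_mem hUb.closure hw.1 (subset_closure hx)).trans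
          ((diam_closure U).trans_le hD)
      have := mul_le_mul_of_nonneg_left
        (log_le_log (norm_pos_iff.2 (sub_ne_zero.2 hwx)) hwD) hc.le
      simp only [greenRegularPart, hG.eq_zero_of_mem_frontier w hw]
      linarith) w hw
  have := mul_le_mul_of_nonneg_left (log_le_log ha hwa) hc.le
  simp only [greenRegularPart] at hreg
  linarith

lemma nonneg (hG : IsGreenFunction U x g) (hUo : IsOpen U) (hUb : Bornology.IsBounded U)
    (hx : x ∈ U) {w : E2} (hw : w ∈ U) (hwx : w ≠ x) : 0 ≤ g w := by
  have hc : 0 < 1 / (2 * π) := by positivity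
  obtain ⟨B, hB⟩ := hUb.isCompact_closure.exists_bound_of_continuousOn hG.continuousOn_regular
  obtain ⟨s₁, hs₁, hs₁U⟩ := Metric.isOpen_iff.1 hUo x hx
  -- near the pole the logarithm beats the bounded regular part
  set s := min (s₁ / 2) (exp (-(2 * π * B)))
  have hs : 0 < s := by positivity
  have hlog_s : 1 / (2 * π) * log s ≤ -B := by
    have : log s ≤ -(2 * π * B) := (log_le_log hs (min_le_right _ _)).trans_eq (log_exp _)
    have := mul_le_mul_of_nonneg_left this hc.le
    field_simp at this ⊢
    linarith
  have hnear : ∀ w, 0 < ‖w - x‖ → ‖w - x‖ ≤ s → 0 ≤ g w := by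
    intro w hpos hws
    have hwU : w ∈ U := hs₁U (mem_ball_iff_norm.2 (hws.trans_lt
      ((min_le_left _ _).trans_lt (half_lt_self hs₁))))
    have hreg := neg_le_of_abs_le (hB w (subset_closure hwU))
    have := mul_le_mul_of_nonneg_left (log_le_log hpos hws) hc.le
    simp only [greenRegularPart] at hreg
    linarith
  rcases le_or_gt ‖w - x‖ s with hws | hws
  · exact hnear w (norm_pos_iff.2 (sub_ne_zero.2 hwx)) hws
  have hcl : closure (U \ closedBall x s) ⊆ closure U \ {x} := fun w hw =>
    have hw' := closure_diff_closedBall_subset U x hs.ne' hw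
    ⟨hw'.1, fun h => hw'.2 (h ▸ mem_ball_self hs)⟩
  have hne : ∀ w ∈ U \ closedBall x s, w ≠ x := fun w hw => (hcl (subset_closure hw)).2
  have hfar := nonpos_of_lap_nonneg_s18 (u := fun w => -g w)
    (hUo.sdiff isClosed_closedBall) (hUb.subset sdiff_subset) (hG.continuousOn.mono hcl).neg
    (fun w hw => (hG.contDiffAt hw.1 (hne w hw)).neg)
    (fun w hw => by rw [lap_neg, hG.lap_eq_zero hw.1 (hne w hw), neg_zero])
    (fun w hw => by
      rcases frontier_diff_closedBall_subset _ _ hs.ne' hw with hw | hw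
      · simp [hG.eq_zero_of_mem_frontier w hw]
      · have := mem_sphere_iff_norm.1 hw
        simpa using hnear w (this ▸ hs) this.le)
  simpa using hfar w (subset_closure ⟨hw, by simpa [dist_eq_norm] using hws⟩)

end IsGreenFunction

lemma log_add_sub_log_le {a t : ℝ} (ha : 0 < a) (ht : 0 ≤ t) : log (a + t) - log a ≤ t / a := by
  rw [← log_div (by positivity) ha.ne']
  calc log ((a + t) / a) ≤ (a + t) / a - 1 := log_le_sub_one_of_pos (by positivity)
    _ = t / a := by field_simp; ring

theorem IsGreenFunction.abs_fderiv_le {U : Set E2} {x : E2} {g : E2 → ℝ}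
    (hG : IsGreenFunction U x g) (hUo : IsOpen U) (hUb : Bornology.IsBounded U) (hx : x ∈ U)
    {x₀ : E2} {ε ρ M : ℝ} (hε : 0 < ε) (hερ : ε < ρ) (hM : 0 ≤ M)
    (hann : ball x₀ ρ \ closedBall x₀ ε ⊆ U) (hxρ : ρ < ‖x - x₀‖)
    (hin : sphere x₀ ε ⊆ frontier U) (hout : ∀ w ∈ sphere x₀ ρ, g w ≤ M)
    {z : E2} (hz : z ∈ sphere x₀ ε) (hdiff : DifferentiableAt ℝ g z) :
    |fderiv ℝ g z (‖z - x₀‖⁻¹ • (z - x₀))| ≤ M / (ε * (log ρ - log ε)) := by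
  have hL : 0 < log ρ - log ε := sub_pos.2 (log_lt_log hε hερ)
  have hne : ∀ w ∈ closure (ball x₀ ρ \ closedBall x₀ ε), w ≠ x := fun w hw h => by
    have := closure_ball_subset_closedBall (closure_mono sdiff_subset hw)
    rw [h, mem_closedBall_iff_norm] at this
    exact this.not_gt hxρ
  have hbound := le_of_lap_nonneg_annulus hε hερ
    (hG.continuousOn.mono fun w hw => ⟨closure_mono hann hw, hne w hw⟩)
    (fun w hw => hG.contDiffAt (hann hw) (hne w (subset_closure hw)))
    (fun w hw => (hG.lap_eq_zero (hann hw) (hne w (subset_closure hw))).ge)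
    (fun w hw => (hG.eq_zero_of_mem_frontier w (hin hw)).le) hout
  have hzx₀ : ‖z - x₀‖ = ε := mem_sphere_iff_norm.1 hz
  refine abs_fderiv_apply_le_of_abs_le hdiff (hG.eq_zero_of_mem_frontier z (hin hz))
    (sub_pos.2 hερ) fun t ht => ?_
  set w := z + t • (‖z - x₀‖⁻¹ • (z - x₀))
  have hwx₀ : ‖w - x₀‖ = ε + t := by
    rw [norm_add_smul_inv_norm_smul_sub (ne_of_mem_sphere hz hε.ne') ht.1.le, hzx₀]
  have hwA : w ∈ ball x₀ ρ \ closedBall x₀ ε := by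
    simp only [Set.mem_sdiff, mem_ball_iff_norm, mem_closedBall_iff_norm, hwx₀, not_le]
    constructor <;> linarith [ht.1, ht.2]
  rw [abs_of_nonneg (hG.nonneg hUo hUb hx (hann hwA) (hne w (subset_closure hwA)))]
  calc g w ≤ M * (log ‖w - x₀‖ - log ε) / (log ρ - log ε) := hbound w hwA
    _ ≤ M * (t / ε) / (log ρ - log ε) := by
      rw [hwx₀]; gcongr; exact log_add_sub_log_le hε ht.1.le
    _ = M / (ε * (log ρ - log ε)) * t := by field_simp

theorem green_normal_derivative_bound_general
    (Ω : Set E2) (hΩo : IsOpen Ω) (hΩb : Bornology.IsBounded Ω)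
    (x₀ : E2)
    (ε₁ : ℝ) (hε₁ : 0 < ε₁) (hball : closedBall x₀ ε₁ ⊆ Ω)
    (Gε : ℝ → E2 → E2 → ℝ)
    (hGreg : ∀ ε ∈ Ioo (0:ℝ) ε₁, ∀ y ∈ Ω \ closedBall x₀ ε,
      (∀ x ∈ Ω \ closedBall x₀ ε,
        ContDiffAt ℝ 2 (fun x' => Gε ε x' y + (1 / (2 * π)) * Real.log ‖x' - y‖) x ∧
        lap (fun x' => Gε ε x' y + (1 / (2 * π)) * Real.log ‖x' - y‖) x = 0) ∧
      ContinuousOn (fun x' => Gε ε x' y + (1 / (2 * π)) * Real.log ‖x' - y‖)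
        (closure (Ω \ closedBall x₀ ε)))
    (hGbdry : ∀ ε ∈ Ioo (0:ℝ) ε₁, ∀ y ∈ Ω \ closedBall x₀ ε,
      ∀ x ∈ frontier (Ω \ closedBall x₀ ε), Gε ε x y = 0)
    (hGsymm : ∀ ε ∈ Ioo (0:ℝ) ε₁, ∀ x y : E2, Gε ε x y = Gε ε y x)
    (hGdiff : ∀ ε ∈ Ioo (0:ℝ) ε₁, ∀ x ∈ Ω \ closedBall x₀ ε,
      ∀ z ∈ sphere x₀ ε, DifferentiableAt ℝ (fun z' => Gε ε x z') z) :
    ∀ r > 0, ∃ C > 0, ∃ ε₀ > 0, ε₀ ≤ ε₁ ∧ ∀ ε ∈ Ioo (0:ℝ) ε₀,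
      ∀ x ∈ Ω \ closedBall x₀ ε, r ≤ ‖x - x₀‖ → ∀ z ∈ sphere x₀ ε,
        |fderiv ℝ (fun z' => Gε ε x z') z (-(‖z - x₀‖⁻¹ • (z - x₀)))| ≤ C / ε := by
  intro r hr
  set ρ := min ε₁ (r / 2)
  have hρ : 0 < ρ := lt_min hε₁ (half_pos hr)
  set C := max (1 / (2 * π) * (log (diam Ω) - log (r / 2))) 1
  have hρε₁ : ρ * exp (-1) ≤ ε₁ :=
    (mul_le_of_le_one_right hρ.le (exp_le_one_iff.2 (by norm_num))).trans (min_le_left _ _)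
  refine ⟨C, by positivity, ρ * exp (-1), by positivity, hρε₁, fun ε hε x hx hrx z hz => ?_⟩
  have hεIoo : ε ∈ Ioo 0 ε₁ := ⟨hε.1, hε.2.trans_le hρε₁⟩
  have hL : 1 ≤ log ρ - log ε := by
    have := log_lt_log hε.1 hε.2
    rw [log_mul hρ.ne' (exp_pos _).ne', log_exp] at this
    linarith
  have hερ : ε < ρ := (log_lt_log_iff hε.1 hρ).1 (by linarith)
  have hG : IsGreenFunction (Ω \ closedBall x₀ ε) x (fun w => Gε ε w x) :=
    ⟨(hGreg ε hεIoo x hx).1, (hGreg ε hεIoo x hx).2, hGbdry ε hεIoo x hx⟩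
  have hρΩ : closedBall x₀ ρ ⊆ Ω := (closedBall_subset_closedBall (min_le_left _ _)).trans hball
  have hout : ∀ w ∈ sphere x₀ ρ, Gε ε w x ≤ C := fun w hw =>
    (hG.le_log_sub_log (hΩo.sdiff isClosed_closedBall) (hΩb.subset sdiff_subset) hx
      (diam_mono sdiff_subset hΩb) (half_pos hr)
      (subset_closure ⟨hρΩ (sphere_subset_closedBall hw), by
        rw [mem_closedBall, not_le, mem_sphere.1 hw]; exact hερ⟩)
      (by linarith [norm_sub_le_norm_sub_add_norm_sub x w x₀, norm_sub_rev x w,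
        mem_sphere_iff_norm.1 hw, min_le_right ε₁ (r / 2)])).trans (le_max_left _ _)
  rw [funext (hGsymm ε hεIoo x), map_neg, abs_neg]
  calc _ ≤ C / (ε * (log ρ - log ε)) :=
        hG.abs_fderiv_le (hΩo.sdiff isClosed_closedBall) (hΩb.subset sdiff_subset) hx hε.1 hερ
          (by positivity) (sdiff_subset_sdiff_left (ball_subset_closedBall.trans hρΩ))
          (by linarith [min_le_right ε₁ (r / 2)])
          (sphere_subset_frontier_diff_closedBall hΩo hε.1.ne' hεIoo.2
            (ball_subset_closedBall.trans hball)) hout hz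
          (by simpa [← funext (hGsymm ε hεIoo x)] using hGdiff ε hεIoo x hx z hz)
    _ ≤ C / ε := div_le_div_of_nonneg_left (by positivity) hε.1 (le_mul_of_one_le_right hε.1.le hL)

/-- Bound on the normal derivative of the Green's function `G_ε` of `Ω_ε` on the circle
`∂B(x₀,ε)`: for `x` at distance at least `r` from `x₀`, `|∂G_ε(x,z)/∂ν_z| ≤ C/ε`,
where `ν_z = -(z-x₀)/|z-x₀|`. -/
theorem green_normal_derivative_bound
    (Ω : Set E2) (hΩo : IsOpen Ω) (hΩb : Bornology.IsBounded Ω) (hΩc : Convex ℝ Ω)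
    (x₀ : E2) (hx₀ : x₀ ∈ Ω)
    (ε₁ : ℝ) (hε₁ : 0 < ε₁) (hball : closedBall x₀ ε₁ ⊆ Ω)
    (Gε : ℝ → E2 → E2 → ℝ)
    (hGreg : ∀ ε ∈ Ioo (0:ℝ) ε₁, ∀ y ∈ Ω \ closedBall x₀ ε,
      (∀ x ∈ Ω \ closedBall x₀ ε,
        ContDiffAt ℝ 2 (fun x' => Gε ε x' y + (1 / (2 * π)) * Real.log ‖x' - y‖) x ∧
        lap (fun x' => Gε ε x' y + (1 / (2 * π)) * Real.log ‖x' - y‖) x = 0) ∧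
      ContinuousOn (fun x' => Gε ε x' y + (1 / (2 * π)) * Real.log ‖x' - y‖)
        (closure (Ω \ closedBall x₀ ε)))
    (hGbdry : ∀ ε ∈ Ioo (0:ℝ) ε₁, ∀ y ∈ Ω \ closedBall x₀ ε,
      ∀ x ∈ frontier (Ω \ closedBall x₀ ε), Gε ε x y = 0)
    (hGsymm : ∀ ε ∈ Ioo (0:ℝ) ε₁, ∀ x y : E2, Gε ε x y = Gε ε y x)
    (hGdiff : ∀ ε ∈ Ioo (0:ℝ) ε₁, ∀ x ∈ Ω \ closedBall x₀ ε,
      ∀ z ∈ sphere x₀ ε, DifferentiableAt ℝ (fun z' => Gε ε x z') z) :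
    ∀ r > 0, ∃ C > 0, ∃ ε₀ > 0, ε₀ ≤ ε₁ ∧ ∀ ε ∈ Ioo (0:ℝ) ε₀,
      ∀ x ∈ Ω \ closedBall x₀ ε, r ≤ ‖x - x₀‖ → ∀ z ∈ sphere x₀ ε,
        |fderiv ℝ (fun z' => Gε ε x z') z (-(‖z - x₀‖⁻¹ • (z - x₀)))| ≤ C / ε :=
  green_normal_derivative_bound_general Ω hΩo hΩb x₀ ε₁ hε₁ hball Gε hGreg hGbdry hGsymm hGdiff
end
end
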